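/- Let the underlying graph be a path on agents 1,…,n (edges {i,i+1} for 1 ≤ i < n). For each agent i and any two distinct objects w and y, there is at most one edge {j,j+1} of the path with the following property: there exists a sequence of swaps from σ_0 in which w and y are swapped with each other over edge {j,j+1} and after which agent i holds w. In other words, for every sequence of swaps after which agent i holds w and in which w and y are swapped, the swap of w and y occurs over the same, uniquely determined edge. -/

import Mathlib

/-- The setting of the swap-dynamics model with `N` agents `0, 1, ..., N-1` and
`N` objects, object `j` being the object initially held by agent `j`.
Each agent has a preference list (a duplicate-free list of objects, most preferred
first), and the agents form a social network given by a simple graph. -/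
structure SwapModel (N : ℕ) where
  /-- the preference list of each agent -/
  pref : Fin N → List (Fin N)
  nodup : ∀ i, (pref i).Nodup
  /-- the underlying social network -/
  G : SimpleGraph (Fin N)

namespace SwapModel

variable {N : ℕ}

/-- Agent `i` prefers object `u` to object `v`: both appear on her preference list
and `u` appears (strictly) earlier. -/
def Prefers (M : SwapModel N) (i u v : Fin N) : Prop :=
  ∃ k l : ℕ, k < l ∧ (M.pref i)[k]? = some u ∧ (M.pref i)[l]? = some v

/-- An assignment: a bijection mapping every agent to an object on her list. -/
def IsAssignment (M : SwapModel N) (σ : Fin N → Fin N) : Prop :=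
  Function.Bijective σ ∧ ∀ i, σ i ∈ M.pref i

/-- `(σ 0, σ 1, …, σ t)` is a sequence of swaps: each next assignment arises from
the previous one by performing a swap between two adjacent agents, each of whom
prefers the object of the other agent. -/
def IsSwapSeq (M : SwapModel N) (t : ℕ) (σ : ℕ → Fin N → Fin N) : Prop :=
  M.IsAssignment (σ 0) ∧
    ∀ k, k < t → ∃ i j : Fin N, M.G.Adj i j ∧
      M.Prefers i (σ k j) (σ k i) ∧ M.Prefers j (σ k i) (σ k j) ∧
      σ (k + 1) = σ k ∘ Equiv.swap i j

end SwapModel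

/-- A swap: agent `a1` gives object `o1` to agent `a2` and receives object `o2`;
this records the swap `τ = {{a1, o1}, {a2, o2}}`. -/
structure Swap (N : ℕ) where
  a1 : Fin N
  o1 : Fin N
  a2 : Fin N
  o2 : Fin N

namespace SwapModel

variable {N : ℕ}

/-- The assignment `σ` admits the swap `τ`. -/
def Admitted (M : SwapModel N) (σ : Fin N → Fin N) (τ : Swap N) : Prop :=
  σ τ.a1 = τ.o1 ∧ σ τ.a2 = τ.o2 ∧ M.G.Adj τ.a1 τ.a2 ∧
    M.Prefers τ.a1 τ.o2 τ.o1 ∧ M.Prefers τ.a2 τ.o1 τ.o2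

/-- The assignment obtained from `σ` by performing the swap `τ`. -/
def applySwap (σ : Fin N → Fin N) (τ : Swap N) : Fin N → Fin N :=
  σ ∘ Equiv.swap τ.a1 τ.a2

/-- The assignment obtained from `σ` by performing a sequence of swaps. -/
def applySeq (σ : Fin N → Fin N) : List (Swap N) → (Fin N → Fin N)
  | [] => σ
  | τ :: φ => applySeq (applySwap σ τ) φ

/-- `φ` is a valid swap sequence for the start assignment `σ`. -/
def ValidSeq (M : SwapModel N) (σ : Fin N → Fin N) : List (Swap N) → Prop
  | [] => True
  | τ :: φ => M.Admitted σ τ ∧ M.ValidSeq (applySwap σ τ) φ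

/-- Object `x` is reachable for agent `I` from the initial assignment `σ0`. -/
def Reachable (M : SwapModel N) (σ0 : Fin N → Fin N) (I x : Fin N) : Prop :=
  ∃ φ : List (Swap N), M.ValidSeq σ0 φ ∧ applySeq σ0 φ I = x

end SwapModel

/-- The path graph on `N` agents: agents `i` and `i+1` are adjacent. -/
def pathGraph' (N : ℕ) : SimpleGraph (Fin N) where
  Adj i j := i.val + 1 = j.val ∨ j.val + 1 = i.val
  symm := by constructor; intro i j h; exact h.symm
  loopless := by constructor; intro i h; rcases h with h | h <;> omega

/-- Swap `τ` exchanges the objects `u` and `v`. -/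
def Swap.exchanges {N : ℕ} (τ : Swap N) (u v : Fin N) : Prop :=
  (τ.o1 = u ∧ τ.o2 = v) ∨ (τ.o1 = v ∧ τ.o2 = u)

/-- Swap `τ` takes place over the edge `{j, j+1}` of the path
(agents here being indexed by their `Fin` value). -/
def Swap.onEdge {N : ℕ} (τ : Swap N) (j : ℕ) : Prop :=
  (τ.a1.val = j ∧ τ.a2.val = j + 1) ∨ (τ.a2.val = j ∧ τ.a1.val = j + 1)

/-!
On a path an object moves by at most one agent per swap, and since agents only trade up, an
agent holds any given object during a single time interval. Hence an object never returns to an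
agent it has left: once it moves, its trajectory is monotone.

Suppose `w` and `y` are exchanged, `w` moving from agent `a` to its neighbour `b`. Then `a`
prefers `y` to `w`, while each agent from `b` on, up to both the final holder `i` of `w` and the
initial holder of `y`, receives `y` before `w` and so prefers `w` to `y`. Two such exchanges in
the same direction would give one agent both preferences; exchanges in opposite directions would
put the initial holder of `w` and `i` on incompatible sides. Reading positions through `-x`
instead of `x` turns leftward exchanges into rightward ones, so only the latter are analysed.
-/

section Walk

variable {f : ℕ → ℤ}

theorem exists_eq_of_mem_uIcc_of_abs_step_le_one (hstep : ∀ k, |f (k + 1) - f k| ≤ 1)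
    {a b : ℕ} (hab : a ≤ b) {m : ℤ} (hm : m ∈ Set.uIcc (f a) (f b)) :
    ∃ t ∈ Set.Icc a b, f t = m := by
  induction b, hab using Nat.le_induction with
  | base => exact ⟨a, ⟨le_rfl, le_rfl⟩, by simpa [eq_comm] using hm⟩
  | succ b hab ih =>
    by_cases hmb : m ∈ Set.uIcc (f a) (f b)
    · obtain ⟨t, ⟨hat, htb⟩, ht⟩ := ih hmb
      exact ⟨t, ⟨hat, htb.trans b.le_succ⟩, ht⟩
    · refine ⟨b + 1, ⟨hab.trans b.le_succ, le_rfl⟩, ?_⟩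
      have := abs_le.mp (hstep b)
      simp only [Set.mem_uIcc] at hm hmb
      omega

variable (hstep : ∀ k, |f (k + 1) - f k| ≤ 1)
  (hrev : ∀ s u t, s ≤ u → u ≤ t → f s = f t → f u = f s)
include hstep hrev

theorem apply_le_of_le_of_step_up {c t : ℕ} (hup : f (c + 1) = f c + 1) (ht : t ≤ c) :
    f t ≤ f c := by
  by_contra! hlt
  obtain ⟨s, ⟨hts, hsc⟩, hs⟩ := exists_eq_of_mem_uIcc_of_abs_step_le_one hstep ht
    (m := f (c + 1)) (Set.mem_uIcc.mpr (Or.inr ⟨by omega, by omega⟩))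
  have := hrev s c (c + 1) hsc c.le_succ hs
  omega

theorem le_apply_of_lt_of_step_up {c t : ℕ} (hup : f (c + 1) = f c + 1) (ht : c < t) :
    f (c + 1) ≤ f t := by
  by_contra! hlt
  obtain ⟨s, ⟨hcs, hst⟩, hs⟩ := exists_eq_of_mem_uIcc_of_abs_step_le_one hstep
    (show c + 1 ≤ t from ht) (m := f c) (Set.mem_uIcc.mpr (Or.inr ⟨by omega, by omega⟩))
  have := hrev c (c + 1) s c.le_succ hcs hs.symm
  omega

end Walk

namespace SwapModel

variable {n : ℕ} {M : SwapModel n}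

theorem Prefers.asymm {i u v : Fin n} (huv : M.Prefers i u v) (hvu : M.Prefers i v u) :
    False := by
  obtain ⟨k, l, hkl, hk, hl⟩ := huv
  obtain ⟨k', l', hkl', hk', hl'⟩ := hvu
  have hk_lt := (List.getElem?_eq_some_iff.mp hk).1
  have hl_lt := (List.getElem?_eq_some_iff.mp hl).1
  have : l = k' := (List.getElem?_inj hl_lt (M.nodup i)).mp (hl.trans hk'.symm)
  have : k = l' := (List.getElem?_inj hk_lt (M.nodup i)).mp (hk.trans hl'.symm)
  omega

theorem Prefers.trans {i u v z : Fin n} (huv : M.Prefers i u v) (hvz : M.Prefers i v z) :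
    M.Prefers i u z := by
  obtain ⟨k, l, hkl, hk, hl⟩ := huv
  obtain ⟨k', l', hkl', hk', hl'⟩ := hvz
  have hl_lt := (List.getElem?_eq_some_iff.mp hl).1
  have : l = k' := (List.getElem?_inj hl_lt (M.nodup i)).mp (hl.trans hk'.symm)
  exact ⟨k, l', by omega, hk, hl'⟩

def track : List (Swap n) → Fin n → Fin n
  | [], p => p
  | τ :: φ, p => track φ (Equiv.swap τ.a1 τ.a2 p)

theorem applySeq_track (σ : Fin n → Fin n) (φ : List (Swap n)) (p : Fin n) :
    applySeq σ φ (track φ p) = σ p := by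
  induction φ generalizing σ p with
  | nil => rfl
  | cons τ φ ih => simp [applySeq, track, ih, applySwap]

theorem applySeq_append (σ : Fin n → Fin n) (φ ψ : List (Swap n)) :
    applySeq σ (φ ++ ψ) = applySeq (applySeq σ φ) ψ := by
  induction φ generalizing σ with
  | nil => rfl
  | cons τ φ ih => exact ih _

theorem track_append (φ ψ : List (Swap n)) (p : Fin n) :
    track (φ ++ ψ) p = track ψ (track φ p) := by
  induction φ generalizing p with
  | nil => rfl
  | cons τ φ ih => exact ih _

theorem applySeq_injective {σ : Fin n → Fin n} (hσ : Function.Injective σ)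
    (φ : List (Swap n)) :
    Function.Injective (applySeq σ φ) := by
  induction φ generalizing σ with
  | nil => exact hσ
  | cons τ φ ih => exact ih (hσ.comp (Equiv.swap τ.a1 τ.a2).injective)

theorem applySeq_take_succ (σ : Fin n → Fin n) {φ : List (Swap n)} {k : ℕ}
    (hk : k < φ.length) :
    applySeq σ (φ.take (k + 1)) = applySwap (applySeq σ (φ.take k)) φ[k] := by
  rw [List.take_succ_eq_append_getElem hk, applySeq_append]
  rfl

theorem track_take_succ {φ : List (Swap n)} {k : ℕ} (hk : k < φ.length) (p : Fin n) :
    track (φ.take (k + 1)) p = Equiv.swap φ[k].a1 φ[k].a2 (track (φ.take k) p) := by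
  rw [List.take_succ_eq_append_getElem hk, track_append]
  rfl

theorem ValidSeq.admitted_getElem {σ : Fin n → Fin n} {φ : List (Swap n)}
    (hv : M.ValidSeq σ φ) {k : ℕ} (hk : k < φ.length) :
    M.Admitted (applySeq σ (φ.take k)) φ[k] := by
  induction φ generalizing σ k with
  | nil => simp at hk
  | cons τ φ ih =>
    cases k with
    | zero => exact hv.1
    | succ k => exact ih hv.2 (Nat.lt_of_succ_lt_succ hk)

theorem Admitted.prefers_applySwap {σ : Fin n → Fin n} {τ : Swap n} (h : M.Admitted σ τ)
    {a : Fin n} (hne : applySwap σ τ a ≠ σ a) : M.Prefers a (applySwap σ τ a) (σ a) := by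
  obtain ⟨h1, h2, -, hp1, hp2⟩ := h
  simp only [applySwap, Function.comp_apply] at hne ⊢
  rcases eq_or_ne a τ.a1 with rfl | ha1
  · rwa [Equiv.swap_apply_left, h1, h2]
  rcases eq_or_ne a τ.a2 with rfl | ha2
  · rwa [Equiv.swap_apply_right, h1, h2]
  exact absurd (by rw [Equiv.swap_apply_of_ne_of_ne ha1 ha2]) hne

variable {σ : Fin n → Fin n} {φ : List (Swap n)}

theorem ValidSeq.prefers_of_ne (hv : M.ValidSeq σ φ) (a : Fin n) {s t : ℕ} (hst : s ≤ t)
    (hne : applySeq σ (φ.take t) a ≠ applySeq σ (φ.take s) a) :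
    M.Prefers a (applySeq σ (φ.take t) a) (applySeq σ (φ.take s) a) := by
  induction t, hst using Nat.le_induction with
  | base => exact absurd rfl hne
  | succ t hst ih =>
    have step : applySeq σ (φ.take (t + 1)) a ≠ applySeq σ (φ.take t) a →
        M.Prefers a (applySeq σ (φ.take (t + 1)) a) (applySeq σ (φ.take t) a) := by
      intro hne'
      by_cases ht : t < φ.length
      · rw [applySeq_take_succ σ ht] at hne' ⊢
        exact (hv.admitted_getElem ht).prefers_applySwap hne'
      · rw [List.take_of_length_le (by omega), List.take_of_length_le (by omega)] at hne'
        exact absurd rfl hne'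
    by_cases hts : applySeq σ (φ.take t) a = applySeq σ (φ.take s) a
    · rw [← hts] at hne ⊢
      exact step hne
    by_cases htt : applySeq σ (φ.take (t + 1)) a = applySeq σ (φ.take t) a
    · rw [htt]
      exact ih hts
    exact (step htt).trans (ih hts)

theorem ValidSeq.apply_eq_of_le_of_le (hv : M.ValidSeq σ φ) (a : Fin n) {s u t : ℕ}
    (hsu : s ≤ u) (hut : u ≤ t) {x : Fin n} (hs : applySeq σ (φ.take s) a = x)
    (ht : applySeq σ (φ.take t) a = x) : applySeq σ (φ.take u) a = x := by
  by_contra hne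
  refine (hv.prefers_of_ne a hsu (hs ▸ hne)).asymm ?_
  rw [hs]
  exact ht ▸ hv.prefers_of_ne a hut (ht ▸ Ne.symm hne)

theorem ValidSeq.track_eq_of_le_of_le (hv : M.ValidSeq σ φ) (hσ : Function.Injective σ)
    (p : Fin n) {s u t : ℕ} (hsu : s ≤ u) (hut : u ≤ t)
    (hst : track (φ.take s) p = track (φ.take t) p) :
    track (φ.take u) p = track (φ.take s) p := by
  apply applySeq_injective hσ (φ.take u)
  rw [applySeq_track]
  refine (hv.apply_eq_of_le_of_le _ hsu hut (applySeq_track σ _ p) ?_).symm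
  rw [hst, applySeq_track]

theorem ValidSeq.abs_sub_track_le_one (hv : M.ValidSeq σ φ) {o : Fin n → ℤ}
    (ho : ∀ a b, M.G.Adj a b → |o a - o b| ≤ 1) (p : Fin n) (k : ℕ) :
    |o (track (φ.take (k + 1)) p) - o (track (φ.take k) p)| ≤ 1 := by
  by_cases hk : k < φ.length
  · have hadj := (hv.admitted_getElem hk).2.2.1
    rw [track_take_succ hk]
    set a := track (φ.take k) p
    rcases eq_or_ne a φ[k].a1 with ha1 | ha1
    · rw [ha1, Equiv.swap_apply_left, abs_sub_comm]
      exact ho _ _ hadj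
    rcases eq_or_ne a φ[k].a2 with ha2 | ha2
    · rw [ha2, Equiv.swap_apply_right]
      exact ho _ _ hadj
    simp [Equiv.swap_apply_of_ne_of_ne ha1 ha2]
  · rw [List.take_of_length_le (by omega), List.take_of_length_le (by omega)]
    simp

/-- What a swap sequence forces when, read along the coordinate `o`, the exchange of `w` and `y`
moves `w` up from agent `a` to the next agent, `w` and `y` being held initially by `p` and `q`
and finally `w` by `i`. -/
structure ExchangeFrom (M : SwapModel n) (o : Fin n → ℤ) (p q i w y a : Fin n) : Prop where
  start_le : o p ≤ o a
  lt_final : o a < o i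
  lt_start : o a < o q
  prefers_at : M.Prefers a y w
  prefers_beyond : ∀ A, o a < o A → o A ≤ o i → o A ≤ o q → M.Prefers A w y

theorem ExchangeFrom.eq {o : Fin n → ℤ} (ho : Function.Injective o) {p q i w y a a' : Fin n}
    (h : M.ExchangeFrom o p q i w y a) (h' : M.ExchangeFrom o p q i w y a') : a = a' := by
  refine ho (le_antisymm (not_lt.mp fun hlt => ?_) (not_lt.mp fun hlt => ?_))
  · exact (h'.prefers_beyond a hlt (by linarith [h.lt_final]) (by linarith [h.lt_start])).asymm
      h.prefers_at
  · exact (h.prefers_beyond a' hlt (by linarith [h'.lt_final]) (by linarith [h'.lt_start])).asymm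
      h'.prefers_at

theorem ExchangeFrom.not_neg {o : Fin n → ℤ} {p q i w y a a' : Fin n}
    (h : M.ExchangeFrom o p q i w y a) (h' : M.ExchangeFrom (fun x => -o x) p q i w y a') :
    False := by
  linarith [h.start_le, h.lt_final, neg_le_neg_iff.mp h'.start_le, neg_lt_neg_iff.mp h'.lt_final]

theorem ValidSeq.exchangeFrom (hv : M.ValidSeq σ φ) (hσ : Function.Injective σ)
    {o : Fin n → ℤ} (ho_inj : Function.Injective o)
    (ho : ∀ a b, M.G.Adj a b → |o a - o b| ≤ 1) {p q i w y : Fin n} (hp : σ p = w)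
    (hq : σ q = y) (hwy : w ≠ y) {c : ℕ} (hc : c < φ.length)
    (hpc : track (φ.take (c + 1)) p = track (φ.take c) q)
    (hqc : track (φ.take (c + 1)) q = track (φ.take c) p)
    (hup : o (track (φ.take c) q) = o (track (φ.take c) p) + 1) (hi : applySeq σ φ i = w) :
    M.ExchangeFrom o p q i w y (track (φ.take c) p) := by
  set a := track (φ.take c) p
  have hstep r := hv.abs_sub_track_le_one ho r
  have hrev r s u t (hsu : s ≤ u) (hut : u ≤ t)
      (hst : o (track (φ.take s) r) = o (track (φ.take t) r)) :
      o (track (φ.take u) r) = o (track (φ.take s) r) :=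
    congrArg o (hv.track_eq_of_le_of_le hσ r hsu hut (ho_inj hst))
  have hfinal : track (φ.take φ.length) p = i := by
    rw [List.take_length]
    exact applySeq_injective hσ φ (by rw [applySeq_track, hp, hi])
  have hw_up : o (track (φ.take (c + 1)) p) = o (track (φ.take c) p) + 1 := by rw [hpc, hup]
  have hw_after := le_apply_of_lt_of_step_up (hstep p) (hrev p) hw_up hc
  rw [hpc, hup, hfinal] at hw_after
  have hy_before : o (track (φ.take c) q) ≤ o q := by
    have := apply_le_of_le_of_step_up (f := fun k => -o (track (φ.take k) q))
      (fun k => by simpa only [neg_sub_neg, abs_sub_comm] using hstep q k)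
      (fun s u t hsu hut hst => by simpa using hrev q s u t hsu hut (neg_inj.mp hst))
      (by simp only [hqc, hup]; ring) (Nat.zero_le c)
    simpa [track] using this
  refine ⟨?_, by omega, by omega, ?_, ?_⟩
  · simpa [track] using apply_le_of_le_of_step_up (hstep p) (hrev p) hw_up (Nat.zero_le c)
  · have hw : applySeq σ (φ.take c) a = w := (applySeq_track σ _ p).trans hp
    have hy : applySeq σ (φ.take (c + 1)) a = y := by
      rw [← hqc, applySeq_track, hq]
    rw [← hw, ← hy]
    exact hv.prefers_of_ne a c.le_succ (by rw [hw, hy]; exact hwy.symm)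
  · intro A hlo hle_i hle_q
    obtain ⟨t₁, ⟨-, ht₁⟩, hy⟩ := exists_eq_of_mem_uIcc_of_abs_step_le_one
      (f := fun k => o (track (φ.take k) q)) (hstep q) (Nat.zero_le c) (m := o A)
      (Set.mem_uIcc.mpr (Or.inr ⟨by simp only [hup]; omega, by simpa [track] using hle_q⟩))
    obtain ⟨t₂, ⟨ht₂, -⟩, hw⟩ := exists_eq_of_mem_uIcc_of_abs_step_le_one
      (f := fun k => o (track (φ.take k) p)) (hstep p) (show c + 1 ≤ φ.length from hc)
      (m := o A) (Set.mem_uIcc.mpr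
        (Or.inl ⟨by simp only [hpc, hup]; omega, by simpa only [hfinal] using hle_i⟩))
    have hyA : applySeq σ (φ.take t₁) A = y := by rw [← ho_inj hy, applySeq_track, hq]
    have hwA : applySeq σ (φ.take t₂) A = w := by rw [← ho_inj hw, applySeq_track, hp]
    rw [← hyA, ← hwA]
    exact hv.prefers_of_ne A (by omega) (by rw [hyA, hwA]; exact hwy)

theorem ValidSeq.track_of_exchanges (hv : M.ValidSeq σ φ) (hσ : Function.Injective σ)
    {p q w y : Fin n} (hp : σ p = w) (hq : σ q = y) {c : ℕ} (hc : c < φ.length)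
    (hex : φ[c].exchanges w y) :
    track (φ.take (c + 1)) p = track (φ.take c) q ∧
      track (φ.take (c + 1)) q = track (φ.take c) p ∧
      ((track (φ.take c) p = φ[c].a1 ∧ track (φ.take c) q = φ[c].a2) ∨
        (track (φ.take c) p = φ[c].a2 ∧ track (φ.take c) q = φ[c].a1)) := by
  obtain ⟨h1, h2, -⟩ := hv.admitted_getElem hc
  have holder {r : Fin n} {b : Fin n} (h : applySeq σ (φ.take c) b = σ r) :
      track (φ.take c) r = b :=
    applySeq_injective hσ _ (by rw [applySeq_track, h])
  simp only [track_take_succ hc]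
  rcases hex with ⟨ho1, ho2⟩ | ⟨ho1, ho2⟩
  · have hpa := holder (r := p) (h1.trans (ho1.trans hp.symm))
    have hqa := holder (r := q) (h2.trans (ho2.trans hq.symm))
    simp [hpa, hqa]
  · have hpa := holder (r := p) (h2.trans (ho2.trans hp.symm))
    have hqa := holder (r := q) (h1.trans (ho1.trans hq.symm))
    simp [hpa, hqa]

theorem ValidSeq.exchangeFrom_of_onEdge {N : ℕ} {M : SwapModel (N + 1)}
    (hG : M.G = pathGraph' (N + 1)) {σ : Fin (N + 1) → Fin (N + 1)} {φ : List (Swap (N + 1))}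
    (hv : M.ValidSeq σ φ) (hσ : Function.Injective σ) {p q i w y : Fin (N + 1)}
    (hp : σ p = w) (hq : σ q = y) (hwy : w ≠ y) {j : ℕ}
    (hτ : ∃ τ ∈ φ, τ.exchanges w y ∧ τ.onEdge j) (hi : applySeq σ φ i = w) :
    (∃ a : Fin (N + 1), a.val = j ∧ M.ExchangeFrom (fun x => (x : ℤ)) p q i w y a) ∨
      ∃ a : Fin (N + 1), a.val = j + 1 ∧ M.ExchangeFrom (fun x => -(x : ℤ)) p q i w y a := by
  obtain ⟨τ, hmem, hex, hedge⟩ := hτ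
  obtain ⟨c, hc, rfl⟩ := List.getElem_of_mem hmem
  obtain ⟨hpc, hqc, hord⟩ := hv.track_of_exchanges hσ hp hq hc hex
  have hpath (a b : Fin (N + 1)) (hab : M.G.Adj a b) : |(a : ℤ) - b| ≤ 1 := by
    rw [hG] at hab
    rcases hab with hab | hab <;> rw [abs_le] <;> omega
  have hcross : ((track (φ.take c) p : ℕ) = j ∧ (track (φ.take c) q : ℕ) = j + 1) ∨
      ((track (φ.take c) p : ℕ) = j + 1 ∧ (track (φ.take c) q : ℕ) = j) := by
    unfold Swap.onEdge at hedge
    rcases hord with ⟨hpa, hqa⟩ | ⟨hpa, hqa⟩ <;> rw [hpa, hqa] <;> omega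
  rcases hcross with ⟨hpj, hqj⟩ | ⟨hpj, hqj⟩
  · refine .inl ⟨_, hpj, hv.exchangeFrom hσ (o := fun x => (x : ℤ))
      (Nat.cast_injective.comp Fin.val_injective) hpath hp hq hwy hc hpc hqc
      (by simp only [hpj, hqj]; push_cast; ring) hi⟩
  · refine .inr ⟨_, hpj, hv.exchangeFrom hσ (o := fun x => -(x : ℤ))
      (neg_injective.comp (Nat.cast_injective.comp Fin.val_injective))
      (fun a b h => by rw [neg_sub_neg, abs_sub_comm]; exact hpath a b h)
      hp hq hwy hc hpc hqc (by simp only [hpj, hqj]; push_cast; ring) hi⟩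

end SwapModel

/-- Lemma 2.  The underlying graph is the path on agents
`0, 1, …, N` (edges `{i, i+1}`), with a fixed initial assignment `σ0`.  For each
agent `i` and any two distinct objects `w` and `y` there is at most one edge
`{j, j+1}` of the path such that some sequence of swaps starting from `σ0` swaps
`w` and `y` with each other over the edge `{j, j+1}` and ends with agent `i`
holding `w`. -/
theorem statement7 (N : ℕ) (M : SwapModel (N + 1)) (hG : M.G = pathGraph' (N + 1))
    (σ0 : Fin (N + 1) → Fin (N + 1)) (hσ0 : M.IsAssignment σ0)
    (i w y : Fin (N + 1)) (hwy : w ≠ y) (j j' : ℕ)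
    (h1 : ∃ φ : List (Swap (N + 1)), M.ValidSeq σ0 φ ∧
      (∃ τ ∈ φ, τ.exchanges w y ∧ τ.onEdge j) ∧ SwapModel.applySeq σ0 φ i = w)
    (h2 : ∃ φ : List (Swap (N + 1)), M.ValidSeq σ0 φ ∧
      (∃ τ ∈ φ, τ.exchanges w y ∧ τ.onEdge j') ∧ SwapModel.applySeq σ0 φ i = w) :
    j = j' := by
  obtain ⟨hinj, hsurj⟩ := hσ0.1
  obtain ⟨p, hp⟩ := hsurj w
  obtain ⟨q, hq⟩ := hsurj y
  obtain ⟨φ, hv, hτ, hi⟩ := h1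
  obtain ⟨φ', hv', hτ', hi'⟩ := h2
  have hval : Function.Injective fun x : Fin (N + 1) => (x : ℤ) :=
    Nat.cast_injective.comp Fin.val_injective
  rcases hv.exchangeFrom_of_onEdge hG hinj hp hq hwy hτ hi with ⟨a, ha, h⟩ | ⟨a, ha, h⟩ <;>
    rcases hv'.exchangeFrom_of_onEdge hG hinj hp hq hwy hτ' hi' with
      ⟨a', ha', h'⟩ | ⟨a', ha', h'⟩
  · rw [← ha, ← ha', h.eq hval h']
  · exact (h.not_neg h').elim
  · exact (h'.not_neg h).elim
  · have := h.eq (neg_injective.comp hval) h'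
    omega
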